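/- Let S be a semiring such that for every subtractive left ideal N of S, the inclusion ι : N → S admits a left inverse S-linear map h : S → N with h ∘ ι = id_N. Then S is left k-Noetherian: every ascending chain of subtractive left ideals of S terminates. -/

import Mathlib

/-- A left ideal `N ≤ S` (a submodule of `S` as a left `S`-semimodule) is subtractive. -/
def Subtractive {S : Type*} [Semiring S] (N : Submodule S S) : Prop :=
  ∀ s : S, ∀ x ∈ N, ∀ y ∈ N, s + x = y → s ∈ N

/-!
The union `N` of a chain of subtractive left ideals is again a subtractive left ideal, so the
inclusion `N → S` has an `S`-linear retraction `g`. Then every `x ∈ N` satisfies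
`x = g x = x • g 1`, so `N` is the principal left ideal generated by `g 1`. The generator lies in
some member of the chain, from which point on the chain is constant.
-/

section

variable {S : Type*} [Semiring S]

theorem subtractive_iSup_of_directed {ι : Type*} [Nonempty ι] {f : ι → Submodule S S}
    (hf : ∀ i, Subtractive (f i)) (hdir : Directed (· ≤ ·) f) : Subtractive (⨆ i, f i) := by
  intro s x hx y hy hxy
  rw [Submodule.mem_iSup_of_directed f hdir] at hx hy ⊢
  obtain ⟨i, hxi⟩ := hx
  obtain ⟨j, hyj⟩ := hy
  obtain ⟨k, hik, hjk⟩ := hdir i j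
  exact ⟨k, hf k s x (hik hxi) y (hjk hyj) hxy⟩

theorem Submodule.eq_span_singleton_of_retraction {N : Submodule S S} (g : S →ₗ[S] N)
    (hg : ∀ x : N, g x = x) : N = S ∙ (g 1 : S) := by
  refine le_antisymm (fun x hx => ?_) ((Submodule.span_singleton_le_iff_mem _ _).2 (g 1).2)
  have hx_eq : x = x • (g 1 : S) := by
    rw [← Submodule.coe_smul, ← map_smul, smul_eq_mul, mul_one, hg ⟨x, hx⟩]
  rw [hx_eq]
  exact Submodule.smul_mem _ x (Submodule.mem_span_singleton_self _)

end

/-- if for every subtractive left ideal `N` of `S` the inclusion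
`ι : N → S` admits an `S`-linear left inverse `h : S → N` (`h ∘ ι = id`), then `S` is
left `k`-Noetherian: every ascending chain of subtractive left ideals terminates. -/
theorem stmt_18 (S : Type*) [Semiring S]
    (h : ∀ N : Submodule S S, Subtractive N →
      ∃ g : S →ₗ[S] N, ∀ x : N, g (x : S) = x) :
    ∀ f : ℕ → Submodule S S, (∀ n, Subtractive (f n)) → Monotone f →
      ∃ n, ∀ m, n ≤ m → f m = f n := by
  intro f hsub hmono
  obtain ⟨g, hg⟩ := h _ (subtractive_iSup_of_directed hsub hmono.directed_le)
  have hspan := Submodule.eq_span_singleton_of_retraction g hg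
  obtain ⟨n, hn⟩ := (Submodule.mem_iSup_of_directed f hmono.directed_le).1 (g 1).2
  refine ⟨n, fun m hm => le_antisymm ?_ (hmono hm)⟩
  calc f m ≤ ⨆ i, f i := le_iSup f m
    _ = S ∙ (g 1 : S) := hspan
    _ ≤ f n := (Submodule.span_singleton_le_iff_mem _ _).2 hn
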